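/- For all integers n ≥ 0, r ≥ 1, k ≥ 0: if n ≥ rk then N(n,r,k) = ∑ ∏_{i=0}^{k} N(n_i,r,0), where the sum runs over all (k+1)-tuples of nonnegative integers (n_0, n_1, …, n_k) with n_0 + n_1 + ⋯ + n_k = n - rk; and if n < rk then N(n,r,k) = 0. -/

import Mathlib

/-- The list of maximal runs of a binary word. -/
def runs (w : List Bool) : List (List Bool) := w.splitBy (· == ·)

/-- The number of maximal runs of length `r` in a binary word. -/
def runCount (w : List Bool) (r : ℕ) : ℕ :=
  ((runs w).filter (fun g => g.length = r)).length

/-- The number of maximal runs of 1s of length `r` in a binary word. -/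
def oneRunCount (w : List Bool) (r : ℕ) : ℕ :=
  ((runs w).filter (fun g => g.length = r ∧ g.head? = some true)).length

/-- `N n r k`: the number of binary words of length `n` that begin with `0`
(the empty word counts when `n = 0`) and contain exactly `k` maximal runs of length `r`. -/
def N (n r k : ℕ) : ℕ :=
  Fintype.card {w : Fin n → Bool //
    (List.ofFn w).head? ≠ some true ∧ runCount (List.ofFn w) r = k}

/-- `M n r k`: the number of binary words of length `n` that begin with `0`
and contain exactly `k` maximal runs of 1s of length `r`. -/
def M (n r k : ℕ) : ℕ :=
  Fintype.card {w : Fin n → Bool //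
    (List.ofFn w).head? ≠ some true ∧ oneRunCount (List.ofFn w) r = k}

/-!
Reading off the lengths of its maximal runs identifies a binary word of length `n` starting
with `0` with a composition of `n`, so `N n r k` counts compositions of `n` with exactly `k`
parts equal to `r`. Cutting such a composition at its `k` parts `r` (`List.splitOn r`) leaves
`k + 1` compositions of some `n₀, …, nₖ` without a part `r`, where `n₀ + ⋯ + nₖ = n - r k`;
joining them back with `List.intercalate [r]` inverts the cut. A composition of `n` has at
most `n / r` parts equal to `r`, whence the vanishing for `n < r k`.
-/

namespace List

variable {α : Type*}

theorem map_intercalate_of_map_append {β : Type*} [AddCommMonoid β] (F : List α → β)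
    (hF : ∀ a b, F (a ++ b) = F a + F b) (sep : List α) {ls : List (List α)} (hls : ls ≠ []) :
    F (sep.intercalate ls) = (ls.map F).sum + (ls.length - 1) • F sep := by
  induction ls with
  | nil => exact absurd rfl hls
  | cons l ls ih =>
    cases ls with
    | nil => simp
    | cons l' ls =>
      rw [intercalate_cons_cons, hF, hF, ih (cons_ne_nil _ _)]
      simp only [map_cons, sum_cons, length_cons, Nat.add_sub_cancel, succ_nsmul]
      abel

theorem exists_eq_replicate_append (a : α) (l : List α) :
    ∃ m t, l = replicate m a ++ t ∧ t.head? ≠ some a := by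
  induction l with
  | nil => exact ⟨0, [], rfl, by simp⟩
  | cons b l ih =>
    obtain ⟨m, t, rfl, ht⟩ := ih
    by_cases hab : b = a
    · exact ⟨m + 1, t, by rw [hab, replicate_succ, cons_append], ht⟩
    · exact ⟨0, b :: replicate m a ++ t, rfl, by simpa using hab⟩

variable [DecidableEq α]

theorem mem_and_ne_of_mem_of_mem_splitOn {x y : α} {l m : List α} (hm : m ∈ l.splitOn x)
    (hy : y ∈ m) : y ∈ l ∧ y ≠ x := by
  induction l generalizing m with
  | nil => simp_all
  | cons a l ih =>
    rw [splitOn_cons_eq_if_modifyHead] at hm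
    split_ifs at hm with hax
    · rcases mem_cons.mp hm with rfl | hm
      · exact absurd hy not_mem_nil
      · exact (ih hm hy).imp_left (mem_cons_of_mem a)
    · obtain ⟨m₀, ms, hsplit⟩ := exists_cons_of_ne_nil (splitOn_ne_nil x l)
      rw [hsplit, modifyHead_cons] at hm
      rcases mem_cons.mp hm with rfl | hm
      · rcases mem_cons.mp hy with rfl | hy
        · exact ⟨mem_cons_self, by simpa using hax⟩
        · exact (ih (hsplit ▸ mem_cons_self) hy).imp_left (mem_cons_of_mem _)
      · exact (ih (hsplit ▸ mem_cons_of_mem _ hm) hy).imp_left (mem_cons_of_mem a)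

theorem not_mem_of_mem_splitOn {x : α} {l m : List α} (hm : m ∈ l.splitOn x) : x ∉ m :=
  fun hx => (mem_and_ne_of_mem_of_mem_splitOn hm hx).2 rfl

theorem count_intercalate_singleton {x : α} {ls : List (List α)} (hx : ∀ m ∈ ls, x ∉ m)
    (hls : ls ≠ []) : ([x].intercalate ls).count x = ls.length - 1 := by
  rw [map_intercalate_of_map_append _ (fun _ _ => count_append) _ hls,
    map_congr_left (fun m hm => count_eq_zero.mpr (hx m hm))]
  simp

theorem length_splitOn (x : α) (l : List α) : (l.splitOn x).length = l.count x + 1 := by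
  conv_rhs => rw [← intercalate_splitOn (xs := l) x]
  rw [count_intercalate_singleton (fun _ => not_mem_of_mem_splitOn) (splitOn_ne_nil x l)]
  have := length_pos_iff.mpr (splitOn_ne_nil x l)
  omega

theorem sum_intercalate_ofFn {β : Type*} [AddCommMonoid β] (x : β) {k : ℕ}
    (f : Fin (k + 1) → List β) : ([x].intercalate (ofFn f)).sum = ∑ i, (f i).sum + k • x := by
  rw [map_intercalate_of_map_append _ (fun _ _ => sum_append) _ (by simp), map_ofFn, sum_ofFn,
    length_ofFn, Nat.add_sub_cancel, sum_singleton]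
  rfl

end List

theorem List.mul_count_le_sum (r : ℕ) (l : List ℕ) : r * l.count r ≤ l.sum := by
  calc r * l.count r = (l.filter (· = r)).sum := by simp [filter_eq, mul_comm]
    _ ≤ l.sum := (filter_sublist).sum_le_sum (fun _ _ => Nat.zero_le _)

theorem Composition.zero_notMem_blocks {n : ℕ} (c : Composition n) : 0 ∉ c.blocks :=
  fun h => (c.blocks_pos h).false

open List

def runLengths (w : List Bool) : List ℕ := (runs w).map length

def ofRunLengths : Bool → List ℕ → List Bool
  | _, [] => []
  | b, m :: l => replicate m b ++ ofRunLengths (!b) l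

theorem runs_replicate_append (b : Bool) {m : ℕ} (hm : m ≠ 0) {t : List Bool}
    (ht : t.head? ≠ some b) : runs (replicate m b ++ t) = replicate m b :: runs t := by
  rw [runs, splitBy_append, splitBy_of_isChain (by simpa using hm)
    (isChain_replicate_of_rel m (beq_self_eq_true b))]
  · rfl
  · intro x hx y hy
    rw [eq_of_mem_replicate (mem_of_mem_getLast? hx)]
    rw [Option.mem_def.mp hy, ne_eq, Option.some.injEq] at ht
    simpa using Ne.symm ht

theorem length_ofRunLengths (b : Bool) (l : List ℕ) : (ofRunLengths b l).length = l.sum := by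
  induction l generalizing b with
  | nil => rfl
  | cons m l ih => simp [ofRunLengths, ih]

theorem head?_ofRunLengths_ne {l : List ℕ} (h : 0 ∉ l) (b : Bool) :
    (ofRunLengths b l).head? ≠ some !b := by
  cases l with
  | nil => simp [ofRunLengths]
  | cons m l =>
    obtain ⟨m, rfl⟩ := Nat.exists_eq_succ_of_ne_zero (ne_of_mem_of_not_mem mem_cons_self h)
    simp [ofRunLengths, replicate_succ]

theorem runLengths_ofRunLengths {l : List ℕ} (h : 0 ∉ l) (b : Bool) :
    runLengths (ofRunLengths b l) = l := by
  induction l generalizing b with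
  | nil => rfl
  | cons m l ih =>
    rw [mem_cons, not_or] at h
    have ht : (ofRunLengths (!b) l).head? ≠ some b := by
      simpa using head?_ofRunLengths_ne h.2 (!b)
    rw [ofRunLengths, runLengths, runs_replicate_append b (Ne.symm h.1) ht, map_cons,
      length_replicate, ← runLengths, ih h.2]

theorem ofRunLengths_runLengths {w : List Bool} {b : Bool} (hw : w.head? ≠ some !b) :
    ofRunLengths b (runLengths w) = w := by
  induction hn : w.length using Nat.strong_induction_on generalizing w b with
  | _ n ih =>
    obtain ⟨m, t, rfl, ht⟩ := exists_eq_replicate_append b w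
    rcases Nat.eq_zero_or_pos m with rfl | hm
    · cases t with
      | nil => rfl
      | cons a t => cases a <;> cases b <;> simp_all
    · rw [runLengths, runs_replicate_append b hm.ne' ht, map_cons, length_replicate,
        ofRunLengths, ← runLengths, ih t.length (by simp at hn; omega) (by simpa using ht) rfl]

theorem sum_runLengths (w : List Bool) : (runLengths w).sum = w.length := by
  rw [runLengths, ← length_flatten, runs, flatten_splitBy]

theorem zero_notMem_runLengths (w : List Bool) : 0 ∉ runLengths w := by
  simp [runLengths, runs, nil_notMem_splitBy]

theorem runCount_eq_count_runLengths (w : List Bool) (r : ℕ) :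
    runCount w r = (runLengths w).count r := by
  simp [runCount, runLengths, count_eq_length_filter, filter_map, Function.comp_def,
    _root_.beq_eq_decide]

def Composition.toWord {n : ℕ} (c : Composition n) : Fin n → Bool :=
  fun i => (ofRunLengths false c.blocks)[i.1]'(by rw [length_ofRunLengths, c.blocks_sum]; exact i.2)

theorem Composition.ofFn_toWord {n : ℕ} (c : Composition n) :
    ofFn c.toWord = ofRunLengths false c.blocks :=
  ext_getElem (by simp [length_ofRunLengths]) fun _ _ _ => by simp [Composition.toWord]

def wordEquivComposition (n : ℕ) :
    {w : Fin n → Bool // (ofFn w).head? ≠ some true} ≃ Composition n where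
  toFun w := ⟨runLengths (ofFn w.1),
    fun h => Nat.pos_of_ne_zero (ne_of_mem_of_not_mem h (zero_notMem_runLengths _)),
    by rw [sum_runLengths, length_ofFn]⟩
  invFun c := ⟨c.toWord, by
    simpa [Composition.ofFn_toWord] using head?_ofRunLengths_ne c.zero_notMem_blocks false⟩
  left_inv w := Subtype.ext <| ofFn_injective <| by
    simpa [Composition.ofFn_toWord] using ofRunLengths_runLengths (by simpa using w.2)
  right_inv c := Composition.ext <| by
    simpa [Composition.ofFn_toWord] using runLengths_ofRunLengths c.zero_notMem_blocks false

theorem N_eq_card_composition (n r k : ℕ) :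
    N n r k = Fintype.card {c : Composition n // c.blocks.count r = k} :=
  Fintype.card_congr <| (Equiv.subtypeSubtypeEquivSubtypeInter _ _).symm.trans <|
    (wordEquivComposition n).subtypeEquiv fun w => by
      rw [runCount_eq_count_runLengths]; rfl

namespace Composition

variable {n r k : ℕ}

theorem notMem_of_mem_ofFn_blocks {m : ℕ} {t : Fin m → ℕ}
    (c : ∀ i, {c : Composition (t i) // c.blocks.count r = 0}) :
    ∀ l ∈ ofFn fun i => (c i).1.blocks, r ∉ l := by
  simp only [mem_ofFn, forall_exists_index]
  rintro _ i rfl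
  exact count_eq_zero.mp (c i).2

def joinWith (hr : r ≠ 0) (hn : r * k ≤ n)
    (t : Finset.Nat.antidiagonalTuple (k + 1) (n - r * k))
    (c : ∀ i, {c : Composition (t.1 i) // c.blocks.count r = 0}) :
    {c : Composition n // c.blocks.count r = k} :=
  ⟨{ blocks := [r].intercalate (ofFn fun i => (c i).1.blocks)
     blocks_pos := by
      intro y hy
      -- positivity of the parts is `count 0 = 0`, which is additive under `intercalate`
      have hzero : ([r].intercalate (ofFn fun i => (c i).1.blocks)).count 0 = 0 := by
        rw [map_intercalate_of_map_append _ (fun _ _ => count_append) _ (by simp), map_ofFn]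
        simp [Function.comp_def, count_eq_zero.mpr (zero_notMem_blocks _), hr]
      exact Nat.pos_of_ne_zero fun h => count_eq_zero.mp hzero (h ▸ hy)
     blocks_sum := by
      simp only [sum_intercalate_ofFn, blocks_sum, Finset.Nat.mem_antidiagonalTuple.mp t.2,
        smul_eq_mul, mul_comm k r, Nat.sub_add_cancel hn] },
    by
      rw [count_intercalate_singleton (notMem_of_mem_ofFn_blocks c) (by simp), length_ofFn,
        Nat.add_sub_cancel]⟩

theorem bijective_joinWith (hr : r ≠ 0) (hn : r * k ≤ n) :
    Function.Bijective fun tc : Σ t, ∀ i, {c : Composition (t.1 i) // c.blocks.count r = 0} =>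
      joinWith hr hn tc.1 tc.2 := by
  constructor
  · rintro ⟨t, c⟩ ⟨t', c'⟩ h
    have hblocks : (fun i => (c i).1.blocks) = fun i => (c' i).1.blocks := by
      refine ofFn_inj.mp ?_
      rw [← splitOn_intercalate r (notMem_of_mem_ofFn_blocks c) (by simp),
        ← splitOn_intercalate r (notMem_of_mem_ofFn_blocks c') (by simp)]
      exact congrArg (fun c => c.1.blocks.splitOn r) h
    obtain rfl : t = t' := Subtype.ext <| funext fun i => by
      rw [← (c i).1.blocks_sum, ← (c' i).1.blocks_sum, congrFun hblocks i]
    exact congrArg (Sigma.mk t) <| funext fun i => Subtype.ext <| Composition.ext <|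
      congrFun hblocks i
  · rintro ⟨c, hc⟩
    have hlen : (c.blocks.splitOn r).length = k + 1 := by rw [length_splitOn, hc]
    set f : Fin (k + 1) → List ℕ := fun i => (c.blocks.splitOn r)[i.1]'(by rw [hlen]; exact i.2)
    have hf : ofFn f = c.blocks.splitOn r :=
      ext_getElem (by simp [hlen]) fun _ _ _ => by simp only [List.getElem_ofFn, f]
    have hmem : ∀ i, f i ∈ c.blocks.splitOn r := fun i => getElem_mem _
    have hsum : ∑ i, (f i).sum = n - r * k := by
      have := c.blocks_sum
      rw [← intercalate_splitOn (xs := c.blocks) r, ← hf, sum_intercalate_ofFn] at this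
      rw [smul_eq_mul, mul_comm] at this
      omega
    refine ⟨⟨⟨fun i => (f i).sum, Finset.Nat.mem_antidiagonalTuple.mpr hsum⟩,
      fun i => ⟨⟨f i, fun hy => c.blocks_pos (mem_and_ne_of_mem_of_mem_splitOn (hmem i) hy).1,
        rfl⟩, count_eq_zero.mpr (not_mem_of_mem_splitOn (hmem i))⟩⟩, ?_⟩
    refine Subtype.ext <| Composition.ext ?_
    change [r].intercalate (ofFn f) = c.blocks
    rw [hf, intercalate_splitOn]

theorem card_count_eq_sum_prod (hr : r ≠ 0) (hn : r * k ≤ n) :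
    Fintype.card {c : Composition n // c.blocks.count r = k} =
      ∑ t ∈ Finset.Nat.antidiagonalTuple (k + 1) (n - r * k),
        ∏ i, Fintype.card {c : Composition (t i) // c.blocks.count r = 0} := by
  rw [← Fintype.card_of_bijective (bijective_joinWith hr hn), Fintype.card_sigma]
  simp only [Fintype.card_pi]
  rw [← Finset.sum_coe_sort (Finset.Nat.antidiagonalTuple (k + 1) (n - r * k))]

theorem card_count_eq_zero (h : n < r * k) :
    Fintype.card {c : Composition n // c.blocks.count r = k} = 0 :=
  Fintype.card_eq_zero_iff.mpr ⟨fun ⟨c, hc⟩ => by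
    have := c.blocks_sum ▸ hc ▸ mul_count_le_sum r c.blocks
    omega⟩

end Composition

/-- if `n ≥ r k` then `N(n,r,k)` is the sum over all `(k+1)`-tuples
of nonnegative integers summing to `n - r k` of the products `∏ N(nᵢ,r,0)`;
if `n < r k` then `N(n,r,k) = 0`. -/
theorem N_convolution (n r k : ℕ) (hr : 1 ≤ r) :
    (r * k ≤ n → N n r k =
      ∑ t ∈ Finset.Nat.antidiagonalTuple (k + 1) (n - r * k), ∏ i, N (t i) r 0) ∧
    (n < r * k → N n r k = 0) := by
  simp only [N_eq_card_composition]
  exact ⟨Composition.card_count_eq_sum_prod (Nat.one_le_iff_ne_zero.mp hr),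
    Composition.card_count_eq_zero⟩
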